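/- arXiv:2010.13000 — 7 statements merged into one kernel-verified Lean document; each statement's English description precedes it below -/
import Mathlib

section
/- Let n, r ≥ 2 be integers and let f(t) = Σ_{i=0}^{r-1} t^{2i} − t·Σ_{i=0}^{r-2} t^{2i} ∈ ℤ[t]. Then the image of f in the quotient ring ℤ[t]/(t^n − 1) is a unit if and only if gcd(4r − 2, n) = 1. -/
/-!
Writing `m = 2r - 1`, the polynomial is the alternating geometric sum `∑_{j<m} (-t)^j`.

If `n` is odd and coprime to `m`, then `s = -t` satisfies `s^n = -1` in `ℤ[t]/(t^n - 1)`, so the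
geometric sums of `s` of length `2n` vanish; choosing `b` with `m b ≡ 1 (mod 2n)`, the geometric sum
of `s` of length `m` times that of `s^m` of length `b` is the geometric sum of length `m b`, i.e. `1`.

Conversely, if `2 ∣ n` then evaluating at `t = -1` sends the polynomial to `m`, which is not a unit
of `ℤ`. If `d = gcd(m, n) > 1`, map to `𝔽₂[t]/(t^d - 1)`, where `-t = t`: there the image `g` of
the polynomial satisfies `g (t - 1) = t^m - 1 = 0` while `t ≠ 1`.
-/

open Polynomial Finset

section GeomSum

variable {R : Type*} [CommRing R]

theorem geom_sum_mul_geom_sum_pow (x : R) (a b : ℕ) :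
    (∑ i ∈ range a, x ^ i) * ∑ j ∈ range b, (x ^ a) ^ j = ∑ k ∈ range (a * b), x ^ k := by
  induction b with
  | zero => simp
  | succ b ih =>
    rw [sum_range_succ, mul_add, ih, Nat.mul_succ, sum_range_add, sum_mul]
    simp_rw [← pow_mul, ← pow_add, add_comm]

theorem geom_sum_neg_two_mul_sub_one (x : R) {r : ℕ} (hr : r ≠ 0) :
    ∑ j ∈ range (2 * r - 1), (-x) ^ j =
      ∑ i ∈ range r, x ^ (2 * i) - x * ∑ i ∈ range (r - 1), x ^ (2 * i) := by
  obtain ⟨k, rfl⟩ : ∃ k, r = k + 1 := ⟨r - 1, by omega⟩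
  have heven : ∑ j ∈ range (2 * k), (-x) ^ j = (1 - x) * ∑ i ∈ range k, x ^ (2 * i) := by
    simp_rw [← geom_sum_mul_geom_sum_pow, geom_sum_two, neg_sq, pow_mul]
    ring
  rw [show 2 * (k + 1) - 1 = 2 * k + 1 by omega, sum_range_succ, heven, Nat.add_sub_cancel,
    sum_range_succ (fun i => x ^ (2 * i)), Even.neg_pow ⟨k, two_mul k⟩]
  ring

theorem isUnit_geom_sum_of_coprime {u : R} {N a : ℕ} (hN : 1 < N) (hu : u ^ N = 1)
    (hsum : ∑ i ∈ range N, u ^ i = 0) (ha : a.Coprime N) : IsUnit (∑ i ∈ range a, u ^ i) := by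
  obtain ⟨b, -, hab⟩ := Nat.exists_mul_mod_eq_one_of_coprime ha hN
  refine IsUnit.of_mul_eq_one (∑ j ∈ range b, (u ^ a) ^ j) ?_
  rw [geom_sum_mul_geom_sum_pow, ← Nat.div_add_mod (a * b) N, hab, sum_range_succ,
    ← geom_sum_mul_geom_sum_pow, hsum, zero_mul, zero_add, pow_mul, hu, one_pow]

theorem isUnit_geom_sum_of_pow_eq_neg_one {u : R} {n a : ℕ} (hn : n ≠ 0) (hu : u ^ n = -1)
    (ha : a.Coprime (2 * n)) : IsUnit (∑ i ∈ range a, u ^ i) := by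
  refine isUnit_geom_sum_of_coprime (by omega) (by rw [pow_mul', hu, neg_one_sq]) ?_ ha
  rw [mul_comm, ← geom_sum_mul_geom_sum_pow, geom_sum_two, hu, neg_add_cancel, mul_zero]

theorem eq_one_of_isUnit_geom_sum {y : R} {p m : ℕ} (hy : y ^ p = 1) (hpm : p ∣ m)
    (h : IsUnit (∑ i ∈ range m, y ^ i)) : y = 1 := by
  obtain ⟨k, rfl⟩ := hpm
  have hzero : (∑ i ∈ range (p * k), y ^ i) * (y - 1) = 0 := by
    rw [geom_sum_mul, pow_mul, hy, one_pow, sub_self]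
  exact sub_eq_zero.1 (h.mul_right_eq_zero.1 hzero)

end GeomSum

namespace Polynomial

theorem mk_X_pow_eq_one {R : Type*} [CommRing R] (n : ℕ) :
    Ideal.Quotient.mk (Ideal.span {X ^ n - 1}) (X : R[X]) ^ n = 1 := by
  rw [← map_pow, ← map_one (Ideal.Quotient.mk _), Ideal.Quotient.eq]
  exact Ideal.mem_span_singleton_self _

theorem mk_X_ne_one {K : Type*} [CommRing K] [IsDomain K] {p : ℕ} (hp : 2 ≤ p) :
    Ideal.Quotient.mk (Ideal.span {X ^ p - 1}) (X : K[X]) ≠ 1 := by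
  rw [← map_one (Ideal.Quotient.mk _), Ne, Ideal.Quotient.eq, Ideal.mem_span_singleton, ← C_1]
  intro hdvd
  have := natDegree_le_of_dvd hdvd (X_sub_C_ne_zero 1)
  rw [natDegree_X_pow_sub_C, natDegree_X_sub_C] at this
  omega

theorem isUnit_apply_of_isUnit_mk_X_pow_sub_one {R S : Type*} [CommRing R] [CommRing S] {n : ℕ}
    {f : R[X]} (φ : R[X] →+* S) (hφ : φ X ^ n = 1)
    (h : IsUnit (Ideal.Quotient.mk (Ideal.span {X ^ n - 1}) f)) : IsUnit (φ f) := by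
  have hker : Ideal.span {X ^ n - 1} ≤ RingHom.ker φ := by
    rw [Ideal.span_singleton_le_iff_mem, RingHom.mem_ker, map_sub, map_pow, hφ, map_one, sub_self]
  exact h.map (Ideal.Quotient.lift _ φ fun a ha => hker ha)

theorem isUnit_mk_geom_sum_neg_X_of_coprime {R : Type*} [CommRing R] {m n : ℕ} (hm : Odd m)
    (h : Nat.Coprime (2 * m) n) :
    IsUnit (Ideal.Quotient.mk (Ideal.span {(X : R[X]) ^ n - 1}) (∑ j ∈ range m, (-X) ^ j)) := by
  have hn : Odd n := Nat.coprime_two_left.1 (Nat.Coprime.coprime_mul_right h)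
  have hmn : m.Coprime (2 * n) :=
    Nat.Coprime.mul_right (Nat.coprime_two_right.2 hm) (Nat.Coprime.coprime_mul_left h)
  have hx : (-Ideal.Quotient.mk (Ideal.span {(X : R[X]) ^ n - 1}) X) ^ n = -1 :=
    (hn.neg_pow _).trans (congrArg Neg.neg (mk_X_pow_eq_one n))
  simpa only [map_sum, map_pow, map_neg] using isUnit_geom_sum_of_pow_eq_neg_one hn.pos.ne' hx hmn

theorem odd_of_isUnit_mk_geom_sum_neg_X {m n : ℕ} (hm : m ≠ 1)
    (h : IsUnit (Ideal.Quotient.mk (Ideal.span {(X : ℤ[X]) ^ n - 1}) (∑ j ∈ range m, (-X) ^ j))) :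
    Odd n := by
  by_contra hn
  have hunit : IsUnit (m : ℤ) := by
    simpa using isUnit_apply_of_isUnit_mk_X_pow_sub_one (evalRingHom (-1))
      (by simpa using (Nat.not_odd_iff_even.1 hn).neg_one_pow) h
  exact hm (Nat.isUnit_iff.1 (Int.ofNat_isUnit.1 hunit))

theorem not_isUnit_mk_geom_sum_neg_X_of_dvd {m n p : ℕ} (hp : 2 ≤ p) (hpm : p ∣ m) (hpn : p ∣ n) :
    ¬IsUnit (Ideal.Quotient.mk (Ideal.span {(X : ℤ[X]) ^ n - 1}) (∑ j ∈ range m, (-X) ^ j)) := by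
  intro h
  set S := (ZMod 2)[X] ⧸ Ideal.span {(X : (ZMod 2)[X]) ^ p - 1}
  set y : S := Ideal.Quotient.mk _ X
  have hneg : -y = y := by
    have h2 : (2 : S) = 0 := by
      rw [← map_ofNat (algebraMap (ZMod 2) S) 2, show (2 : ZMod 2) = 0 from rfl, map_zero]
    rw [neg_eq_iff_add_eq_zero, ← two_mul, h2, zero_mul]
  have hyn : eval₂RingHom (Int.castRingHom S) y X ^ n = 1 := by
    obtain ⟨k, rfl⟩ := hpn
    rw [coe_eval₂RingHom, eval₂_X, pow_mul, mk_X_pow_eq_one, one_pow]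
  have hunit := isUnit_apply_of_isUnit_mk_X_pow_sub_one _ hyn h
  simp only [map_sum, map_pow, map_neg, coe_eval₂RingHom, eval₂_X, hneg] at hunit
  exact mk_X_ne_one hp (eq_one_of_isUnit_geom_sum (mk_X_pow_eq_one p) hpm hunit)

theorem coprime_of_isUnit_mk_geom_sum_neg_X {m n : ℕ} (hm : 1 < m)
    (h : IsUnit (Ideal.Quotient.mk (Ideal.span {(X : ℤ[X]) ^ n - 1}) (∑ j ∈ range m, (-X) ^ j))) :
    Nat.Coprime (2 * m) n := by
  refine Nat.Coprime.mul_left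
    (Nat.coprime_two_left.2 (odd_of_isUnit_mk_geom_sum_neg_X hm.ne' h)) ?_
  by_contra hmn
  have hgcd : 2 ≤ m.gcd n := by
    have := Nat.gcd_pos_of_pos_left n (by omega : 0 < m)
    rw [Nat.Coprime] at hmn
    omega
  exact not_isUnit_mk_geom_sum_neg_X_of_dvd hgcd (m.gcd_dvd_left n) (m.gcd_dvd_right n) h

end Polynomial

open Polynomial in
theorem stmt_4_general (n r : ℕ) (hr : 2 ≤ r) :
    IsUnit (Ideal.Quotient.mk (Ideal.span {(X : ℤ[X]) ^ n - 1})
        ((∑ i ∈ Finset.range r, (X : ℤ[X]) ^ (2 * i)) -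
          X * ∑ i ∈ Finset.range (r - 1), (X : ℤ[X]) ^ (2 * i)))
      ↔ Nat.gcd (4 * r - 2) n = 1 := by
  rw [← geom_sum_neg_two_mul_sub_one X (by omega : r ≠ 0),
    show 4 * r - 2 = 2 * (2 * r - 1) by omega]
  exact ⟨coprime_of_isUnit_mk_geom_sum_neg_X (by omega),
    isUnit_mk_geom_sum_neg_X_of_coprime ⟨r - 1, by omega⟩⟩

open Polynomial in
theorem stmt_4 (n r : ℕ) (hn : 2 ≤ n) (hr : 2 ≤ r) :
    IsUnit (Ideal.Quotient.mk (Ideal.span {(X : ℤ[X]) ^ n - 1})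
        ((∑ i ∈ Finset.range r, (X : ℤ[X]) ^ (2 * i)) -
          X * ∑ i ∈ Finset.range (r - 1), (X : ℤ[X]) ^ (2 * i)))
      ↔ Nat.gcd (4 * r - 2) n = 1 :=
  stmt_4_general n r hr
end

section
/- Let f ∈ ℤ[X] and n ≥ 1. Then the image of f in ℤ[X]/(X^n − 1) is a unit if and only if the product of f(λ) over all complex n-th roots of unity λ equals 1 or −1. -/
/-!
`f` is a unit modulo the monic polynomial `p = X ^ n - 1` iff `p` and `f` are coprime in `ℤ[X]`,
iff the resultant `Res(p, f)` is a unit of `ℤ`, i.e. `± 1`. Since `p` is monic and splits over `ℂ`,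
`Res(p, f) = ∏_{p(λ) = 0} f(λ)`, and the roots of `p` are the `n`-th roots of unity.
-/

open Polynomial

theorem Ideal.Quotient.isUnit_mk_span_singleton_iff {R : Type*} [CommRing R] (p f : R) :
    IsUnit (Ideal.Quotient.mk (Ideal.span {p}) f) ↔ IsCoprime p f := by
  rw [isUnit_iff_exists_inv]
  constructor
  · rintro ⟨y, hy⟩
    obtain ⟨g, rfl⟩ := Ideal.Quotient.mk_surjective y
    rw [← map_mul, ← map_one (Ideal.Quotient.mk _), Ideal.Quotient.eq,
      Ideal.mem_span_singleton'] at hy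
    obtain ⟨a, ha⟩ := hy
    exact ⟨-a, g, by linear_combination -ha⟩
  · rintro ⟨a, g, h⟩
    refine ⟨Ideal.Quotient.mk _ g, ?_⟩
    rw [← map_mul, ← map_one (Ideal.Quotient.mk _), Ideal.Quotient.eq, Ideal.mem_span_singleton']
    exact ⟨-a, by linear_combination -h⟩

theorem Polynomial.algebraMap_resultant_eq_prod_aroots {R K : Type*} [CommRing R] [CommRing K]
    [IsDomain K] [Algebra R K] {p : R[X]} (hp : p.Monic) (hsplit : (p.map (algebraMap R K)).Splits)
    (f : R[X]) :
    algebraMap R K (resultant p f) = ((p.aroots K).map fun x ↦ aeval x f).prod := by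
  rw [← resultant_map_map, ← hp.natDegree_map (algebraMap R K),
    resultant_eq_prod_eval _ _ _ natDegree_map_le hsplit, (hp.map _).leadingCoeff, one_pow,
    one_mul, aroots_def]
  simp only [eval_map_algebraMap]

open Polynomial in
theorem stmt_5 (f : ℤ[X]) (n : ℕ) (hn : 1 ≤ n) :
    IsUnit (Ideal.Quotient.mk (Ideal.span {(X : ℤ[X]) ^ n - 1}) f)
      ↔ ((Polynomial.nthRoots n (1 : ℂ)).map (fun lam => Polynomial.aeval lam f)).prod = 1 ∨
        ((Polynomial.nthRoots n (1 : ℂ)).map (fun lam => Polynomial.aeval lam f)).prod = -1 := by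
  have hmonic : ((X : ℤ[X]) ^ n - 1).Monic := by
    simpa using monic_X_pow_sub_C (1 : ℤ) (by omega : n ≠ 0)
  have hroots : ((X : ℤ[X]) ^ n - 1).aroots ℂ = nthRoots n (1 : ℂ) := by
    simp [aroots_def, nthRoots]
  have hprod := algebraMap_resultant_eq_prod_aroots (K := ℂ) hmonic (IsAlgClosed.splits _) f
  rw [hroots, algebraMap_int_eq, eq_intCast] at hprod
  rw [Ideal.Quotient.isUnit_mk_span_singleton_iff, ← isUnit_resultant_iff_isCoprime hmonic,
    Int.isUnit_iff, ← hprod]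
  norm_cast
end

section
/- Let r, s ≥ 1 and n ≥ 2 be integers, and let f(t) = Σ_{i=0}^{r-1} t^i − t^r · Σ_{i=0}^{s-1} t^i ∈ ℤ[t]. Then the product of f(λ) over all complex n-th roots of unity λ has absolute value 1 if and only if |r − s| = 1 and (n divides r or n divides s). -/
/-!
Write `u = λ^r` and `v = λ^s`. Then `(λ - 1) f(λ) = (u - v) - (1 - u)(1 - v)`, and for
`|u| = |v| = 1` the two terms on the right are orthogonal in `ℂ ≅ ℝ²`. If `|r - s| = 1` and
`|λ| = 1` then `|u - v| = |λ - 1|`, so `|λ - 1|² |f(λ)|² = |λ - 1|² + |1 - λ^r|² |1 - λ^s|²`: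
every factor of the product has modulus at least `1`, with equality exactly when `λ^r = 1` or
`λ^s = 1`, and testing this at a primitive `n`-th root of unity gives the divisibility condition.

The condition `|r - s| = 1` itself is forced by integrality: the product is `f(1) = r - s` times
`∏_{λ ≠ 1} f(λ)`, the resultant of `1 + X + ⋯ + X^(n-1)` and `f`, which is an integer.
-/

open Polynomial

theorem Polynomial.prod_roots_aeval_eq_algebraMap_resultant {R K : Type*} [CommRing R] [Field K]
    [Algebra R K] {g : R[X]} (hg : g.Monic) (hsplit : (g.map (algebraMap R K)).Splits)
    (f : R[X]) :
    ((g.map (algebraMap R K)).roots.map fun x => aeval x f).prod =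
      algebraMap R K (resultant g f g.natDegree f.natDegree) := by
  have := resultant_eq_prod_eval (g.map (algebraMap R K)) (f.map (algebraMap R K)) f.natDegree
    natDegree_map_le hsplit
  rw [hg.natDegree_map, resultant_map_map, (hg.map _).leadingCoeff, one_pow, one_mul] at this
  simp only [this, eval_map_algebraMap]

theorem Polynomial.nthRoots_one_eq_cons_roots_geom_sum {K : Type*} [Field K] {n : ℕ}
    (hn : n ≠ 0) : nthRoots n (1 : K) = 1 ::ₘ (∑ i ∈ Finset.range n, (X : K[X]) ^ i).roots := by
  have h : (X : K[X]) ^ n - C 1 = (X - C 1) * ∑ i ∈ Finset.range n, X ^ i := by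
    rw [map_one, mul_comm, geom_sum_mul]
  rw [nthRoots, h, roots_mul (h ▸ X_pow_sub_C_ne_zero (Nat.pos_of_ne_zero hn) 1), roots_X_sub_C,
    Multiset.singleton_add]

theorem Polynomial.exists_prod_nthRoots_aeval_eq_mul_intCast {n : ℕ} (hn : n ≠ 0) (f : ℤ[X]) :
    ∃ z : ℤ, ((nthRoots n (1 : ℂ)).map fun x => aeval x f).prod = aeval 1 f * z := by
  set g : ℤ[X] := ∑ i ∈ Finset.range n, X ^ i
  have hg : g.map (algebraMap ℤ ℂ) = ∑ i ∈ Finset.range n, X ^ i := by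
    simp [g, Polynomial.map_sum]
  refine ⟨resultant g f g.natDegree f.natDegree, ?_⟩
  rw [nthRoots_one_eq_cons_roots_geom_sum hn, Multiset.map_cons, Multiset.prod_cons, ← hg,
    prod_roots_aeval_eq_algebraMap_resultant (monic_geom_sum_X hn) (IsAlgClosed.splits _),
    eq_intCast]

theorem Multiset.eq_one_of_prod_map_eq_one {R α : Type*} [CommMonoidWithZero R] [PartialOrder R]
    [ZeroLEOneClass R] [PosMulMono R] {s : Multiset α} {f : α → R} (h : ∀ a ∈ s, 1 ≤ f a)
    (hprod : (s.map f).prod = 1) {a : α} (ha : a ∈ s) : f a = 1 := by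
  classical
  refine le_antisymm ?_ (h a ha)
  calc f a ≤ f a * ((s.erase a).map f).prod :=
        le_mul_of_one_le_right (zero_le_one.trans (h a ha))
          (one_le_prod_map fun b hb => h b (mem_of_mem_erase hb))
    _ = 1 := by rw [prod_map_erase ha, hprod]

theorem Multiset.norm_prod_map {α β : Type*} [SeminormedCommRing α] [NormMulClass α]
    [NormOneClass α] (s : Multiset β) (f : β → α) :
    ‖(s.map f).prod‖ = (s.map fun b => ‖f b‖).prod := by
  rw [← normHom_apply, map_multiset_prod, Multiset.map_map]
  rfl

theorem Complex.normSq_sub_sub_mul_of_norm_eq_one {u v : ℂ} (hu : ‖u‖ = 1) (hv : ‖v‖ = 1) :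
    normSq (u - v - (1 - u) * (1 - v)) = normSq (u - v) + normSq (1 - u) * normSq (1 - v) := by
  have hu0 : u ≠ 0 := by rintro rfl; simp at hu
  have hv0 : v ≠ 0 := by rintro rfl; simp at hv
  have hcu : (starRingEnd ℂ) u = u⁻¹ := by rw [inv_def, normSq_eq_norm_sq, hu]; simp
  have hcv : (starRingEnd ℂ) v = v⁻¹ := by rw [inv_def, normSq_eq_norm_sq, hv]; simp
  apply ofReal_injective
  push_cast
  simp only [← mul_conj, map_sub, map_mul, map_one, hcu, hcv]
  field_simp
  ring

noncomputable def representerPoly (r s : ℕ) : ℤ[X] :=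
  ∑ i ∈ Finset.range r, X ^ i - X ^ r * ∑ i ∈ Finset.range s, X ^ i

section representerPoly

variable {r s : ℕ}

theorem aeval_one_representerPoly {A : Type*} [CommRing A] (r s : ℕ) :
    aeval (1 : A) (representerPoly r s) = r - s := by
  simp [representerPoly]

theorem norm_aeval_one_representerPoly (r s : ℕ) :
    ‖aeval (1 : ℂ) (representerPoly r s)‖ = |(r : ℤ) - s| := by
  simpa [aeval_one_representerPoly] using Complex.norm_intCast ((r : ℤ) - s)

theorem sub_one_mul_aeval_representerPoly {A : Type*} [CommRing A] (r s : ℕ) (x : A) :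
    (x - 1) * aeval x (representerPoly r s) = x ^ r - x ^ s - (1 - x ^ r) * (1 - x ^ s) := by
  simp only [representerPoly, map_sub, map_mul, map_sum, map_pow, aeval_X]
  rw [mul_sub, ← mul_assoc, mul_comm (x - 1) (x ^ r), mul_assoc, mul_geom_sum, mul_geom_sum]
  ring

theorem normSq_pow_sub_pow_of_norm_eq_one {x : ℂ} (hx : ‖x‖ = 1) (hrs : |(r : ℤ) - s| = 1) :
    Complex.normSq (x ^ r - x ^ s) = Complex.normSq (x - 1) := by
  have key : ∀ k, Complex.normSq (x ^ k - x ^ (k + 1)) = Complex.normSq (x - 1) := fun k => by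
    rw [show x ^ k - x ^ (k + 1) = -x ^ k * (x - 1) by ring, Complex.normSq_mul,
      Complex.normSq_neg, map_pow, Complex.normSq_eq_norm_sq, hx]
    simp
  rcases abs_eq (zero_le_one' ℤ) |>.mp hrs with h | h
  · obtain rfl : r = s + 1 := by omega
    rw [← Complex.normSq_neg, neg_sub, key]
  · obtain rfl : s = r + 1 := by omega
    exact key r

theorem normSq_aeval_representerPoly {x : ℂ} (hx : ‖x‖ = 1) (hx1 : x ≠ 1)
    (hrs : |(r : ℤ) - s| = 1) :
    Complex.normSq (aeval x (representerPoly r s)) =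
      1 + Complex.normSq (1 - x ^ r) * Complex.normSq (1 - x ^ s) / Complex.normSq (x - 1) := by
  have hx1' : Complex.normSq (x - 1) ≠ 0 := by simpa [sub_eq_zero] using hx1
  have hxr : ‖x ^ r‖ = 1 := by rw [norm_pow, hx, one_pow]
  have hxs : ‖x ^ s‖ = 1 := by rw [norm_pow, hx, one_pow]
  have key := congrArg Complex.normSq (sub_one_mul_aeval_representerPoly r s x)
  rw [Complex.normSq_mul, Complex.normSq_sub_sub_mul_of_norm_eq_one hxr hxs,
    normSq_pow_sub_pow_of_norm_eq_one hx hrs] at key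
  field_simp
  linarith

theorem one_le_norm_aeval_representerPoly {x : ℂ} (hx : ‖x‖ = 1) (hrs : |(r : ℤ) - s| = 1) :
    1 ≤ ‖aeval x (representerPoly r s)‖ := by
  rcases eq_or_ne x 1 with rfl | hx1
  · rw [norm_aeval_one_representerPoly, hrs, Int.cast_one]
  · rw [← Complex.one_le_normSq_iff, normSq_aeval_representerPoly hx hx1 hrs,
      le_add_iff_nonneg_right]
    exact div_nonneg (mul_nonneg (Complex.normSq_nonneg _) (Complex.normSq_nonneg _))
      (Complex.normSq_nonneg _)

theorem norm_aeval_representerPoly_eq_one_iff {x : ℂ} (hx : ‖x‖ = 1)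
    (hrs : |(r : ℤ) - s| = 1) :
    ‖aeval x (representerPoly r s)‖ = 1 ↔ x ^ r = 1 ∨ x ^ s = 1 := by
  rcases eq_or_ne x 1 with rfl | hx1
  · simp [norm_aeval_one_representerPoly, hrs]
  · have hx1' : Complex.normSq (x - 1) ≠ 0 := by simpa [sub_eq_zero] using hx1
    rw [← pow_eq_one_iff_of_nonneg (norm_nonneg _) two_ne_zero, ← Complex.normSq_eq_norm_sq,
      normSq_aeval_representerPoly hx hx1 hrs, add_eq_left, div_eq_zero_iff, or_iff_left hx1',
      mul_eq_zero, Complex.normSq_eq_zero, Complex.normSq_eq_zero, sub_eq_zero, sub_eq_zero,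
      eq_comm, @eq_comm _ 1]

theorem abs_sub_eq_one_of_norm_prod_nthRoots_eq_one {n : ℕ} (hn : n ≠ 0)
    (h : ‖((nthRoots n (1 : ℂ)).map fun x => aeval x (representerPoly r s)).prod‖ = 1) :
    |(r : ℤ) - s| = 1 := by
  obtain ⟨z, hz⟩ := exists_prod_nthRoots_aeval_eq_mul_intCast hn (representerPoly r s)
  rw [hz, norm_mul, norm_aeval_one_representerPoly, Complex.norm_intCast] at h
  exact Int.eq_one_of_mul_eq_one_right (abs_nonneg _) (by exact_mod_cast h)

end representerPoly

open Polynomial in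
theorem stmt_9_general (r s n : ℕ) (hn : 2 ≤ n) :
    ‖(((Polynomial.nthRoots n (1 : ℂ)).map (fun lam =>
          Polynomial.aeval lam
            ((∑ i ∈ Finset.range r, (X : ℤ[X]) ^ i) -
              X ^ r * ∑ i ∈ Finset.range s, (X : ℤ[X]) ^ i))).prod)‖ = 1
      ↔ (|(r : ℤ) - (s : ℤ)| = 1 ∧ (n ∣ r ∨ n ∣ s)) := by
  change ‖((nthRoots n (1 : ℂ)).map fun x => aeval x (representerPoly r s)).prod‖ = 1 ↔ _
  have hn0 : 0 < n := by omega
  obtain ⟨ζ, hζ⟩ : ∃ ζ : ℂ, IsPrimitiveRoot ζ n := ⟨_, Complex.isPrimitiveRoot_exp n hn0.ne'⟩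
  have hroot : ∀ x ∈ nthRoots n (1 : ℂ), ‖x‖ = 1 := fun x hx =>
    Complex.norm_eq_one_of_pow_eq_one ((mem_nthRoots hn0).mp hx) hn0.ne'
  have hζmem : ζ ∈ nthRoots n (1 : ℂ) := (mem_nthRoots hn0).mpr hζ.pow_eq_one
  constructor
  · intro h
    have hrs := abs_sub_eq_one_of_norm_prod_nthRoots_eq_one hn0.ne' h
    rw [Multiset.norm_prod_map] at h
    have hζnorm := Multiset.eq_one_of_prod_map_eq_one
      (fun x hx => one_le_norm_aeval_representerPoly (hroot x hx) hrs) h hζmem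
    refine ⟨hrs, ?_⟩
    simpa only [hζ.pow_eq_one_iff_dvd] using
      (norm_aeval_representerPoly_eq_one_iff (hroot ζ hζmem) hrs).mp hζnorm
  · rintro ⟨hrs, hdvd⟩
    rw [Multiset.norm_prod_map]
    refine Multiset.prod_eq_one fun y hy => ?_
    obtain ⟨x, hx, rfl⟩ := Multiset.mem_map.mp hy
    refine (norm_aeval_representerPoly_eq_one_iff (hroot x hx) hrs).mpr ?_
    have hxn := (mem_nthRoots hn0).mp hx
    rcases hdvd with ⟨k, rfl⟩ | ⟨k, rfl⟩
    · exact Or.inl (by rw [pow_mul, hxn, one_pow])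
    · exact Or.inr (by rw [pow_mul, hxn, one_pow])

open Polynomial in
theorem stmt_9 (r s n : ℕ) (hr : 1 ≤ r) (hs : 1 ≤ s) (hn : 2 ≤ n) :
    ‖(((Polynomial.nthRoots n (1 : ℂ)).map (fun lam =>
          Polynomial.aeval lam
            ((∑ i ∈ Finset.range r, (X : ℤ[X]) ^ i) -
              X ^ r * ∑ i ∈ Finset.range s, (X : ℤ[X]) ^ i))).prod)‖ = 1
      ↔ (|(r : ℤ) - (s : ℤ)| = 1 ∧ (n ∣ r ∨ n ∣ s)) :=
  stmt_9_general r s n hn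
end

section
/- Let n ≥ 2, q ≥ 1 with gcd(n, q) = 1, let k ≥ 1, let r = α·n + r' and s = β·n + s' with α, β ≥ 0 and 1 ≤ r', s' ≤ n and r' ≠ s'. Let f(t) = Σ_{i=0}^{r-1} t^{iq} − t^{k-1}·Σ_{i=0}^{s-1} t^{iq} and f'(t) = Σ_{i=0}^{r'-1} t^{iq} − t^{k-1}·Σ_{i=0}^{s'-1} t^{iq}. Then (r' − s') · Π_{λ^n=1} f(λ) = (r − s) · Π_{λ^n=1} f'(λ). -/
/-! At `λ = 1` the two polynomials take the values `r - s` and `r' - s'`. At any other `n`-th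
root of unity `λ`, `λ^q` is again an `n`-th root of unity, and `λ^q ≠ 1` since `gcd n q = 1`,
so a geometric sum in `λ^q` of length `αn + r'` equals the one of length `r'`. Hence
`f λ = f' λ`, and splitting off the factor at `1` from both products gives the identity. -/

open Finset

theorem geom_sum_range_mul_add_of_pow_eq_one {K : Type*} [Field K] {μ : K} {n : ℕ}
    (hμn : μ ^ n = 1) (hμ : μ ≠ 1) (a b : ℕ) :
    ∑ i ∈ range (a * n + b), μ ^ i = ∑ i ∈ range b, μ ^ i := by
  rw [geom_sum_eq hμ, geom_sum_eq hμ, pow_add, pow_mul', hμn, one_pow, one_mul]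

theorem pow_ne_one_of_pow_eq_one_of_coprime {M : Type*} [Monoid M] {x : M} {n q : ℕ}
    (hxn : x ^ n = 1) (hx : x ≠ 1) (hnq : Nat.gcd n q = 1) : x ^ q ≠ 1 := by
  intro hxq
  have hgcd := pow_gcd_eq_one.mpr ⟨hxn, hxq⟩
  rw [hnq, pow_one] at hgcd
  exact hx hgcd

theorem sum_range_mul_add_pow_mul_of_pow_eq_one {K : Type*} [Field K] {x : K} {n q : ℕ}
    (hxn : x ^ n = 1) (hx : x ≠ 1) (hnq : Nat.gcd n q = 1) (a b : ℕ) :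
    ∑ i ∈ range (a * n + b), x ^ (i * q) = ∑ i ∈ range b, x ^ (i * q) := by
  have hxqn : (x ^ q) ^ n = 1 := by rw [← pow_mul, mul_comm, pow_mul, hxn, one_pow]
  simp only [mul_comm _ q, pow_mul]
  exact geom_sum_range_mul_add_of_pow_eq_one hxqn
    (pow_ne_one_of_pow_eq_one_of_coprime hxn hx hnq) a b

theorem Multiset.mul_prod_map_eq_of_forall_ne {α M : Type*} [CommMonoid M] [DecidableEq α]
    {s : Multiset α} {a : α} (hs : s.Nodup) (ha : a ∈ s) {f g : α → M}
    (hfg : ∀ x ∈ s, x ≠ a → f x = g x) :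
    g a * (s.map f).prod = f a * (s.map g).prod := by
  have herase : ((s.erase a).map f).prod = ((s.erase a).map g).prod := by
    refine congrArg _ (Multiset.map_congr rfl fun x hx => ?_)
    obtain ⟨hxa, hxs⟩ := hs.mem_erase_iff.mp hx
    exact hfg x hxs hxa
  rw [← Multiset.prod_map_erase ha, ← Multiset.prod_map_erase ha (f := g), herase, mul_left_comm]

theorem stmt_10_general (n q k : ℕ) (hn : 2 ≤ n)
    (hgcd : Nat.gcd n q = 1) (α β : ℕ) (r' s' r s : ℕ)
    (hr : r = α * n + r') (hs : s = β * n + s')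
    (f f' : ℂ → ℂ)
    (hf : ∀ t : ℂ, f t = (∑ i ∈ Finset.range r, t ^ (i * q)) -
        t ^ (k - 1) * ∑ i ∈ Finset.range s, t ^ (i * q))
    (hf' : ∀ t : ℂ, f' t = (∑ i ∈ Finset.range r', t ^ (i * q)) -
        t ^ (k - 1) * ∑ i ∈ Finset.range s', t ^ (i * q)) :
    ((r' : ℂ) - (s' : ℂ)) * ((Polynomial.nthRoots n (1 : ℂ)).map f).prod
      = ((r : ℂ) - (s : ℂ)) * ((Polynomial.nthRoots n (1 : ℂ)).map f').prod := by
  have hn0 : 0 < n := by omega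
  have hf1 : f 1 = (r : ℂ) - (s : ℂ) := by simp [hf 1]
  have hf'1 : f' 1 = (r' : ℂ) - (s' : ℂ) := by simp [hf' 1]
  rw [← hf1, ← hf'1]
  refine Multiset.mul_prod_map_eq_of_forall_ne
    (Complex.isPrimitiveRoot_exp n hn0.ne').nthRoots_one_nodup
    ((Polynomial.mem_nthRoots hn0).mpr (one_pow n)) fun x hx hx1 => ?_
  have hxn : x ^ n = 1 := (Polynomial.mem_nthRoots hn0).mp hx
  rw [hf, hf', hr, hs, sum_range_mul_add_pow_mul_of_pow_eq_one hxn hx1 hgcd,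
    sum_range_mul_add_pow_mul_of_pow_eq_one hxn hx1 hgcd]

theorem stmt_10 (n q k : ℕ) (hn : 2 ≤ n) (hq : 1 ≤ q) (hk : 1 ≤ k)
    (hgcd : Nat.gcd n q = 1) (α β : ℕ) (r' s' r s : ℕ)
    (hr'1 : 1 ≤ r') (hr'n : r' ≤ n) (hs'1 : 1 ≤ s') (hs'n : s' ≤ n) (hne : r' ≠ s')
    (hr : r = α * n + r') (hs : s = β * n + s')
    (f f' : ℂ → ℂ)
    (hf : ∀ t : ℂ, f t = (∑ i ∈ Finset.range r, t ^ (i * q)) -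
        t ^ (k - 1) * ∑ i ∈ Finset.range s, t ^ (i * q))
    (hf' : ∀ t : ℂ, f' t = (∑ i ∈ Finset.range r', t ^ (i * q)) -
        t ^ (k - 1) * ∑ i ∈ Finset.range s', t ^ (i * q)) :
    ((r' : ℂ) - (s' : ℂ)) * ((Polynomial.nthRoots n (1 : ℂ)).map f).prod
      = ((r : ℂ) - (s : ℂ)) * ((Polynomial.nthRoots n (1 : ℂ)).map f').prod :=
  stmt_10_general n q k hn hgcd α β r' s' r s hr hs f f' hf hf'
end

section
/- Let n ≥ 2 and k, q, r ≥ 1 be integers such that gcd(n, k − 1) = 1 and 2(k − 1) ≡ q (mod n). Then gcd(n, 2r − 1) = gcd(n, k − 1 − q·r). -/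
/-! Modulo `n` we have `k - 1 - q r ≡ (k - 1) - 2 (k - 1) r = -(k - 1)(2 r - 1)`, and the factor
`k - 1` is a unit modulo `n`, so it does not change the gcd with `n`. -/

theorem Int.ModEq.gcd_eq {n a b : ℤ} (h : a ≡ b [ZMOD n]) : Int.gcd n a = Int.gcd n b := by
  obtain ⟨c, hc⟩ := h.dvd
  rw [show b = a + c * n by linarith, Int.gcd_add_mul_right_right]

theorem Int.sub_mul_modEq_neg_mul_two_mul_sub_one {n a q : ℤ} (h : 2 * a ≡ q [ZMOD n]) (r : ℤ) :
    a - q * r ≡ -(a * (2 * r - 1)) [ZMOD n] := by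
  calc a - q * r ≡ a - 2 * a * r [ZMOD n] := (Int.ModEq.refl a).sub (h.symm.mul_right r)
    _ = -(a * (2 * r - 1)) := by ring

theorem stmt_12_general (n k q r : ℕ) (hk : 1 ≤ k)
    (hgcd : Nat.gcd n (k - 1) = 1)
    (hcong : (2 * ((k : ℤ) - 1)) ≡ (q : ℤ) [ZMOD n]) :
    Int.gcd (n : ℤ) (2 * (r : ℤ) - 1) = Int.gcd (n : ℤ) ((k : ℤ) - 1 - (q : ℤ) * r) := by
  have hcop : Int.gcd n ((k : ℤ) - 1) = 1 := by
    rw [← Int.natCast_pred_of_pos hk, Int.gcd_natCast_natCast, hgcd]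
  rw [(Int.sub_mul_modEq_neg_mul_two_mul_sub_one hcong r).gcd_eq, Int.gcd_neg,
    Int.gcd_mul_right_right_of_gcd_eq_one hcop]

theorem stmt_12 (n k q r : ℕ) (hn : 2 ≤ n) (hk : 1 ≤ k) (hq : 1 ≤ q) (hr : 1 ≤ r)
    (hgcd : Nat.gcd n (k - 1) = 1)
    (hcong : (2 * ((k : ℤ) - 1)) ≡ (q : ℤ) [ZMOD n]) :
    Int.gcd (n : ℤ) (2 * (r : ℤ) - 1) = Int.gcd (n : ℤ) ((k : ℤ) - 1 - (q : ℤ) * r) :=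
  stmt_12_general n k q r hk hgcd hcong
end

section
/- Let f ∈ ℤ[X] and n ≥ 1. Then the integer f(1) divides the product of f(λ) taken over all complex n-th roots of unity λ (this product being an integer). -/
/-!
Splitting off the root `1`, the product is `f(1)` times the product of `f(λ)` over the roots of
`1 + X + ⋯ + X^(n-1)`. That polynomial is monic over `ℤ`, so the latter product is the resultant
of it and `f`, an integer.
-/

open Polynomial

theorem Polynomial.prod_roots_map_aeval_eq_resultant {R K : Type*} [CommRing R] [Field K]
    [Algebra R K] {p : R[X]} (hp : p.Monic) (hs : (p.map (algebraMap R K)).Splits) (f : R[X]) :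
    ((p.map (algebraMap R K)).roots.map fun x => aeval x f).prod =
      algebraMap R K (resultant p f p.natDegree f.natDegree) := by
  rw [← resultant_map_map, ← hp.natDegree_map (algebraMap R K),
    resultant_eq_prod_eval _ _ _ natDegree_map_le hs, (hp.map _).leadingCoeff, one_pow, one_mul]
  simp only [aeval_def, eval₂_eq_eval_map]

theorem Polynomial.nthRoots_one_eq_one_cons_roots_geom_sum {K : Type*} [CommRing K] [IsDomain K]
    {n : ℕ} (hn : n ≠ 0) :
    nthRoots n (1 : K) = 1 ::ₘ (∑ i ∈ Finset.range n, (X : K[X]) ^ i).roots := by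
  have hg := monic_geom_sum_X (R := K) hn
  rw [nthRoots, C_1, ← mul_geom_sum, ← C_1, roots_mul ((monic_X_sub_C 1).mul hg).ne_zero,
    roots_X_sub_C, Multiset.singleton_add]

open Polynomial in
theorem stmt_13 (f : ℤ[X]) (n : ℕ) (hn : 1 ≤ n) :
    ∃ m : ℤ, ((Polynomial.nthRoots n (1 : ℂ)).map (fun lam => Polynomial.aeval lam f)).prod
      = ((f.eval 1 : ℤ) : ℂ) * (m : ℂ) := by
  set g : ℤ[X] := ∑ i ∈ Finset.range n, X ^ i
  have hg : g.Monic := monic_geom_sum_X (by omega)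
  have hgC : g.map (algebraMap ℤ ℂ) = ∑ i ∈ Finset.range n, (X : ℂ[X]) ^ i := by
    simp [g, Polynomial.map_sum]
  refine ⟨resultant g f g.natDegree f.natDegree, ?_⟩
  rw [nthRoots_one_eq_one_cons_roots_geom_sum (by omega), Multiset.map_cons, Multiset.prod_cons,
    ← hgC, prod_roots_map_aeval_eq_resultant hg (IsAlgClosed.splits _)]
  simp [aeval_def, eval₂_at_one]
end

section
/- Let n ≥ 2 and r ≥ 1 with n dividing r, and let f(t) = Σ_{i=0}^{r-1} t^i − t^r·Σ_{i=0}^{r-2} t^i ∈ ℤ[t]. Then the image of f in ℤ[t]/(t^n − 1) is a unit. -/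
/-! Modulo `t ^ n - 1` with `n ∣ r` we have `t ^ r = 1`, so the two geometric sums in `f` cancel
except for the top term: `f ≡ t ^ (r - 1)`, a power of the unit `t`. -/

open Finset

lemma Ideal.Quotient.mk_span_sub_one_self {R : Type*} [CommRing R] (a : R) :
    Ideal.Quotient.mk (Ideal.span {a - 1}) a = 1 := by
  rw [← sub_eq_zero, ← map_one (Ideal.Quotient.mk _), ← map_sub]
  exact Ideal.Quotient.mk_singleton_self _

lemma geom_sum_sub_pow_mul_geom_sum_pred {R : Type*} [CommRing R] {x : R} {r : ℕ}
    (hx : x ^ r = 1) (hr : 1 ≤ r) :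
    (∑ i ∈ range r, x ^ i) - x ^ r * ∑ i ∈ range (r - 1), x ^ i = x ^ (r - 1) := by
  obtain ⟨m, rfl⟩ := Nat.exists_eq_add_of_le' hr
  rw [hx, one_mul, sum_range_succ, Nat.add_sub_cancel, add_sub_cancel_left]

lemma isUnit_geom_sum_sub_pow_mul_geom_sum_pred {R : Type*} [CommRing R] {x : R} {r : ℕ}
    (hx : x ^ r = 1) (hr : 1 ≤ r) :
    IsUnit ((∑ i ∈ range r, x ^ i) - x ^ r * ∑ i ∈ range (r - 1), x ^ i) := by
  rw [geom_sum_sub_pow_mul_geom_sum_pred hx hr]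
  exact (IsUnit.of_pow_eq_one hx (by omega)).pow _

open Polynomial in
theorem stmt_16_general (n r : ℕ) (hr : 1 ≤ r) (hdvd : n ∣ r) :
    IsUnit (Ideal.Quotient.mk (Ideal.span {(X : ℤ[X]) ^ n - 1})
      ((∑ i ∈ Finset.range r, (X : ℤ[X]) ^ i) -
        X ^ r * ∑ i ∈ Finset.range (r - 1), (X : ℤ[X]) ^ i)) := by
  set Q := Ideal.Quotient.mk (Ideal.span {(X : ℤ[X]) ^ n - 1})
  have hXr : Q X ^ r = 1 := by
    obtain ⟨k, rfl⟩ := hdvd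
    rw [pow_mul, ← map_pow, Ideal.Quotient.mk_span_sub_one_self, one_pow]
  simp only [map_sub, map_mul, map_sum, map_pow]
  exact isUnit_geom_sum_sub_pow_mul_geom_sum_pred hXr hr

open Polynomial in
theorem stmt_16 (n r : ℕ) (hn : 2 ≤ n) (hr : 1 ≤ r) (hdvd : n ∣ r) :
    IsUnit (Ideal.Quotient.mk (Ideal.span {(X : ℤ[X]) ^ n - 1})
      ((∑ i ∈ Finset.range r, (X : ℤ[X]) ^ i) -
        X ^ r * ∑ i ∈ Finset.range (r - 1), (X : ℤ[X]) ^ i)) :=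
  stmt_16_general n r hr hdvd
end
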